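/- Let C = (x_0, y_0, x_1, y_1) be an alternating cycle on four vertices of a graph G, and let T be an unweighted tree whose leaves include x_0, y_0, x_1, y_1. Then T can satisfy C if and only if T contains the quartet x_0 y_0 | x_1 y_1. -/

import Mathlib

/-!
If the tree paths `x₀ – y₀` and `x₁ – y₁` share a vertex `w`, splitting both at `w` and going
through `w` by the triangle inequality gives `d(y₀, x₁) + d(y₁, x₀) ≤ d(x₀, y₀) + d(x₁, y₁)`
for every weighting, so no threshold separates the two edges of the cycle from its two
non-edges. If the paths are disjoint, weight their edges `1` and all other edges `|W|`: each
path then weighs less than `|W|`, while a path from one to the other must leave the first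
through a heavy edge.
-/

open SimpleGraph

namespace LeafPaper

/-- A leaf of a graph: a vertex with exactly one neighbor. -/
def IsLeaf {W : Type} (T : SimpleGraph W) (w : W) : Prop := ∃! u, T.Adj w u

/-- The edge list of the (unique, if `T` is a tree) path between `x` and `y`. -/
noncomputable def treePathEdges {W : Type} (T : SimpleGraph W) (x y : W) :
    List (Sym2 W) := by
  classical
  exact if h : T.Reachable x y then (Classical.choice h).bypass.edges else []

/-- The weighted distance between `x` and `y` in a tree `T` with edge weighting `f`:
the sum of the weights of the edges on the (unique) path between `x` and `y`. -/
noncomputable def wdist {W : Type} (T : SimpleGraph W) (f : Sym2 W → ℕ) (x y : W) : ℕ :=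
  ((treePathEdges T x y).map f).sum

/-- `(T, f)` is a leaf root of `G` with threshold `k`, where `ι` identifies the
vertices of `G` with the leaves of `T`. -/
def IsLeafRoot {V W : Type} (G : SimpleGraph V) (T : SimpleGraph W) (ι : V → W)
    (f : Sym2 W → ℕ) (k : ℕ) : Prop :=
  T.IsTree ∧ Function.Injective ι ∧ (∀ w : W, IsLeaf T w ↔ w ∈ Set.range ι) ∧
    (∀ e ∈ T.edgeSet, 0 < f e) ∧
    ∀ u v : V, u ≠ v → (G.Adj u v ↔ wdist T f (ι u) (ι v) ≤ k)

/-- An unweighted tree `T` is an unweighted leaf root of `G` if some positive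
integer weighting of its edges makes it a leaf root of `G`. -/
def IsUnweightedLeafRoot {V W : Type} (G : SimpleGraph V) (T : SimpleGraph W)
    (ι : V → W) : Prop :=
  ∃ (f : Sym2 W → ℕ) (k : ℕ), IsLeafRoot G T ι f k

/-- `G` is a leaf power: there are a finite tree `T` whose leaf set is exactly `V(G)`
and a positive threshold `k` such that distinct vertices are adjacent in `G` iff their
tree distance is at most `k`. -/
def IsLeafPower {V : Type} (G : SimpleGraph V) : Prop :=
  ∃ (W : Type) (T : SimpleGraph W) (ι : V → W) (k : ℕ),
    Finite W ∧ T.IsTree ∧ Function.Injective ι ∧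
      (∀ w : W, IsLeaf T w ↔ w ∈ Set.range ι) ∧ 0 < k ∧
      ∀ u v : V, u ≠ v → (G.Adj u v ↔ T.dist (ι u) (ι v) ≤ k)

/-- An alternating cycle `(x 0, y 0, x 1, y 1, …)` of `G`: `2c` distinct vertices
such that `x i y i` is an edge and `y i x (i+1)` is a non-edge (indices mod `c`). -/
def IsAltCycle {V : Type} (G : SimpleGraph V) (c : ℕ) (x y : ZMod c → V) : Prop :=
  2 ≤ c ∧ Function.Injective (Sum.elim x y) ∧
    ∀ i : ZMod c, G.Adj (x i) (y i) ∧ ¬ G.Adj (y i) (x (i + 1))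

/-- The weighted tree `(T, f)` satisfies the alternating cycle given by `x, y`
with threshold `k`. -/
def Satisfies {V W : Type} (T : SimpleGraph W) (f : Sym2 W → ℕ) (ι : V → W)
    (c : ℕ) (x y : ZMod c → V) (k : ℕ) : Prop :=
  ∀ i : ZMod c, wdist T f (ι (x i)) (ι (y i)) ≤ k ∧
    k < wdist T f (ι (y i)) (ι (x (i + 1)))

/-- The unweighted tree `T` can satisfy the alternating cycle given by `x, y`. -/
def CanSatisfy {V W : Type} (T : SimpleGraph W) (ι : V → W) (c : ℕ)
    (x y : ZMod c → V) : Prop :=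
  ∃ (f : Sym2 W → ℕ) (k : ℕ), (∀ e ∈ T.edgeSet, 0 < f e) ∧ Satisfies T f ι c x y k

/-- `T` contains the quartet `ab|cd`: the four vertices are distinct leaves of `T` and
the path between `a` and `b` is vertex-disjoint from the path between `c` and `d`. -/
def ContainsQuartet {W : Type} (T : SimpleGraph W) (a b c d : W) : Prop :=
  IsLeaf T a ∧ IsLeaf T b ∧ IsLeaf T c ∧ IsLeaf T d ∧ a ≠ b ∧ c ≠ d ∧
    ∀ (p : T.Walk a b) (p' : T.Walk c d), p.IsPath → p'.IsPath →
      ∀ w : W, w ∈ p.support → w ∉ p'.support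

theorem _root_.List.Subperm.sum_map_le_sum_map {α M : Type*} [AddCommMonoid M] [PartialOrder M]
    [IsOrderedAddMonoid M] [CanonicallyOrderedAdd M] (f : α → M) {l₁ l₂ : List α}
    (h : l₁.Subperm l₂) : (l₁.map f).sum ≤ (l₂.map f).sum := by
  obtain ⟨l, hperm, hsub⟩ := h
  rw [← (hperm.map f).sum_eq]
  exact (hsub.map f).sum_le_sum fun _ _ => zero_le

section WeightedDistance

variable {W : Type} {T : SimpleGraph W} (f : Sym2 W → ℕ)

theorem wdist_eq_of_isPath (hT : T.IsTree) {u v : W} (p : T.Walk u v) (hp : p.IsPath) :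
    wdist T f u v = (p.edges.map f).sum := by
  classical
  have hr : T.Reachable u v := ⟨p⟩
  rw [wdist, treePathEdges, dif_pos hr,
    (hT.existsUnique_path u v).unique (Classical.choice hr).bypass_isPath hp]

theorem wdist_le_sum_map_edges (hT : T.IsTree) {u v : W} (p : T.Walk u v) :
    wdist T f u v ≤ (p.edges.map f).sum := by
  classical
  rw [wdist_eq_of_isPath f hT p.bypass p.bypass_isPath]
  exact (List.subperm_of_subset p.bypass_isPath.edges_nodup
    p.edges_bypass_subset_edges).sum_map_le_sum_map f

theorem wdist_comm (hT : T.IsTree) (u v : W) : wdist T f u v = wdist T f v u := by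
  obtain ⟨p, hp, -⟩ := hT.existsUnique_path u v
  rw [wdist_eq_of_isPath f hT p hp, wdist_eq_of_isPath f hT p.reverse hp.reverse,
    Walk.edges_reverse, List.map_reverse, List.sum_reverse]

theorem wdist_triangle (hT : T.IsTree) (u v w : W) :
    wdist T f u w ≤ wdist T f u v + wdist T f v w := by
  obtain ⟨p, hp, -⟩ := hT.existsUnique_path u v
  obtain ⟨q, hq, -⟩ := hT.existsUnique_path v w
  calc wdist T f u w ≤ ((p.append q).edges.map f).sum := wdist_le_sum_map_edges f hT _
    _ = wdist T f u v + wdist T f v w := by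
      rw [wdist_eq_of_isPath f hT p hp, wdist_eq_of_isPath f hT q hq, Walk.edges_append,
        List.map_append, List.sum_append]

theorem wdist_eq_add_of_mem_support (hT : T.IsTree) {u v w : W} (p : T.Walk u v)
    (hp : p.IsPath) (hw : w ∈ p.support) :
    wdist T f u v = wdist T f u w + wdist T f w v := by
  classical
  rw [wdist_eq_of_isPath f hT p hp, wdist_eq_of_isPath f hT _ (hp.takeUntil hw),
    wdist_eq_of_isPath f hT _ (hp.dropUntil hw), ← List.sum_append, ← List.map_append,
    ← Walk.edges_append, p.take_spec hw]

theorem wdist_le_length_of_isPath (hT : T.IsTree) {u v : W} (p : T.Walk u v) (hp : p.IsPath)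
    (hf : ∀ e ∈ p.edges, f e ≤ 1) : wdist T f u v ≤ p.length := by
  rw [wdist_eq_of_isPath f hT p hp, ← Walk.length_edges]
  simpa using List.sum_le_sum (g := fun _ => 1) hf

theorem le_wdist_of_mem_of_notMem (hT : T.IsTree) {m : ℕ} (S : Set W) {u v : W} (hu : u ∈ S)
    (hv : v ∉ S) (hf : ∀ a b, T.Adj a b → a ∈ S → b ∉ S → m ≤ f s(a, b)) :
    m ≤ wdist T f u v := by
  obtain ⟨p, hp, -⟩ := hT.existsUnique_path u v
  obtain ⟨d, hd, hdS, hdS'⟩ := p.exists_boundary_dart S hu hv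
  have hde : d.edge ∈ p.edges := p.edges_eq_map_darts ▸ List.mem_map_of_mem hd
  calc m ≤ f d.edge := hf _ _ d.adj hdS hdS'
    _ ≤ wdist T f u v := wdist_eq_of_isPath f hT p hp ▸
      List.le_sum_of_mem (List.mem_map_of_mem hde)

end WeightedDistance

section Quartets

variable {W : Type} {T : SimpleGraph W}

theorem wdist_add_wdist_le_of_mem_support (f : Sym2 W → ℕ) (hT : T.IsTree) {a b c d w : W}
    (p : T.Walk a b) (q : T.Walk c d) (hp : p.IsPath) (hq : q.IsPath)
    (hwp : w ∈ p.support) (hwq : w ∈ q.support) :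
    wdist T f b c + wdist T f d a ≤ wdist T f a b + wdist T f c d := by
  have := wdist_eq_add_of_mem_support f hT p hp hwp
  have := wdist_eq_add_of_mem_support f hT q hq hwq
  have := wdist_triangle f hT b w c
  have := wdist_triangle f hT d w a
  have := wdist_comm f hT b w
  have := wdist_comm f hT w c
  have := wdist_comm f hT d w
  have := wdist_comm f hT w a
  omega

theorem le_wdist_of_disjoint_support (f : Sym2 W → ℕ) (hT : T.IsTree) {m : ℕ} {a b c d : W}
    (p : T.Walk a b) (q : T.Walk c d) (hpq : p.support.Disjoint q.support)
    (hf : ∀ e, e ∉ p.edges → e ∉ q.edges → m ≤ f e) : m ≤ wdist T f b c := by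
  refine le_wdist_of_mem_of_notMem f hT {w | w ∈ p.support} p.end_mem_support
    (fun hc => hpq hc q.start_mem_support) fun u v _ hu hv => hf _ ?_ ?_
  · exact fun h => hv (p.snd_mem_support_of_mem_edges h)
  · exact fun h => hpq hu (q.fst_mem_support_of_mem_edges h)

/-- Weight `1` on the two paths and `|W|` elsewhere; threshold `|W| - 1`. -/
theorem exists_weighting_of_disjoint_support [Fintype W] (hT : T.IsTree) {a b c d : W}
    (p : T.Walk a b) (q : T.Walk c d) (hp : p.IsPath) (hq : q.IsPath)
    (hpq : p.support.Disjoint q.support) :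
    ∃ (f : Sym2 W → ℕ) (k : ℕ), (∀ e, 0 < f e) ∧ wdist T f a b ≤ k ∧ wdist T f c d ≤ k ∧
      k < wdist T f b c ∧ k < wdist T f d a := by
  classical
  set n := Fintype.card W
  have hn : 0 < n := Fintype.card_pos_iff.2 ⟨a⟩
  let f : Sym2 W → ℕ := fun e => if e ∈ p.edges ∨ e ∈ q.edges then 1 else n
  have hf : ∀ e, e ∉ p.edges → e ∉ q.edges → n ≤ f e := fun e hp hq => by simp [f, hp, hq]
  refine ⟨f, n - 1, fun e => by simp only [f]; split <;> omega, ?_, ?_, ?_, ?_⟩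
  · have := wdist_le_length_of_isPath f hT p hp fun e he => by simp [f, he]
    have := hp.length_lt
    omega
  · have := wdist_le_length_of_isPath f hT q hq fun e he => by simp [f, he]
    have := hq.length_lt
    omega
  · have := le_wdist_of_disjoint_support f hT p q hpq hf
    omega
  · have := le_wdist_of_disjoint_support f hT q p hpq.symm fun e hq hp => hf e hp hq
    omega

end Quartets

theorem satisfies_two_iff {V W : Type} {T : SimpleGraph W} {f : Sym2 W → ℕ} {ι : V → W}
    {x y : ZMod 2 → V} {k : ℕ} :
    Satisfies T f ι 2 x y k ↔
      (wdist T f (ι (x 0)) (ι (y 0)) ≤ k ∧ k < wdist T f (ι (y 0)) (ι (x 1))) ∧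
        wdist T f (ι (x 1)) (ι (y 1)) ≤ k ∧ k < wdist T f (ι (y 1)) (ι (x 0)) :=
  Fin.forall_fin_two

theorem IsAltCycle.ne {V : Type} {G : SimpleGraph V} {c : ℕ} {x y : ZMod c → V}
    (hC : IsAltCycle G c x y) (i : ZMod c) : x i ≠ y i :=
  hC.2.1.ne Sum.inl_ne_inr

theorem stmt_6_general {V W : Type} [Fintype W] (G : SimpleGraph V)
    (T : SimpleGraph W) (hT : T.IsTree) (ι : V → W) (hι : Function.Injective ι)
    (x y : ZMod 2 → V) (hC : IsAltCycle G 2 x y)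
    (hleaf : ∀ i : ZMod 2, IsLeaf T (ι (x i)) ∧ IsLeaf T (ι (y i))) :
    CanSatisfy T ι 2 x y ↔
      ContainsQuartet T (ι (x 0)) (ι (y 0)) (ι (x 1)) (ι (y 1)) := by
  constructor
  · rintro ⟨f, k, -, hsat⟩
    refine ⟨(hleaf 0).1, (hleaf 0).2, (hleaf 1).1, (hleaf 1).2, hι.ne (hC.ne 0),
      hι.ne (hC.ne 1), fun p q hp hq w hwp hwq => ?_⟩
    have := wdist_add_wdist_le_of_mem_support f hT p q hp hq hwp hwq
    have := satisfies_two_iff.1 hsat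
    omega
  · rintro ⟨-, -, -, -, -, -, hdisj⟩
    obtain ⟨p, hp, -⟩ := hT.existsUnique_path (ι (x 0)) (ι (y 0))
    obtain ⟨q, hq, -⟩ := hT.existsUnique_path (ι (x 1)) (ι (y 1))
    obtain ⟨f, k, hf, h₀, h₁, h₀₁, h₁₀⟩ :=
      exists_weighting_of_disjoint_support hT p q hp hq fun w => hdisj p q hp hq w
    exact ⟨f, k, fun e _ => hf e, satisfies_two_iff.2 ⟨⟨h₀, h₀₁⟩, h₁, h₁₀⟩⟩

/-- an unweighted tree `T` whose leaves include the four vertices of a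
`4`-alternating cycle `C = (x 0, y 0, x 1, y 1)` of `G` can satisfy `C` iff `T`
contains the quartet `x 0 y 0 | x 1 y 1`. -/
theorem stmt_6 {V W : Type} [Fintype V] [Fintype W] (G : SimpleGraph V)
    (T : SimpleGraph W) (hT : T.IsTree) (ι : V → W) (hι : Function.Injective ι)
    (x y : ZMod 2 → V) (hC : IsAltCycle G 2 x y)
    (hleaf : ∀ i : ZMod 2, IsLeaf T (ι (x i)) ∧ IsLeaf T (ι (y i))) :
    CanSatisfy T ι 2 x y ↔
      ContainsQuartet T (ι (x 0)) (ι (y 0)) (ι (x 1)) (ι (y 1)) :=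
  stmt_6_general G T hT ι hι x y hC hleaf

end LeafPaper
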